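/- Let X be a finite connected multigraph with minimum degree 2 that is not a cycle. For every oriented edge e of X, there exists n ≥ 1 such that there is a non-backtracking path of length n from e to its reversal ě (i.e., q_E^(n)(e, ě) > 0). -/
import Mathlib


open scoped BigOperators
open Filter

/-- A multigraph given by its set of *oriented* edges. Each oriented edge `e`
has an initial vertex `tail e = e⁻`, a terminal vertex `head e = e⁺`, and a
reversal `bar e = ě` with `ě ≠ e` (loops are counted twice). Local finiteness
is built in. -/
structure Multigraph where
  V : Type
  E : Type
  tail : E → V
  head : E → V
  bar : E → E
  bar_bar : ∀ e, bar (bar e) = e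
  bar_ne : ∀ e, bar e ≠ e
  head_bar : ∀ e, head (bar e) = tail e
  locFin : ∀ x, {e | tail e = x}.Finite

namespace Multigraph
variable (G : Multigraph)

/-- The degree of a vertex: the number of oriented edges emanating from it. -/
noncomputable def deg (x : G.V) : ℕ := (G.locFin x).toFinset.card

/-- `e → f`: `f` may follow `e` in a non-backtracking walk. -/
def Step (e f : G.E) : Prop := G.tail f = G.head e ∧ f ≠ G.bar e

/-- `e ⇒ f`: there is a non-backtracking walk from `e` to `f`. -/
def Reach : G.E → G.E → Prop := Relation.ReflTransGen G.Step

/-- One-step transition probabilities of the edge non-backtracking random walk. -/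
noncomputable def q (e f : G.E) : ℝ :=
  open Classical in
  if G.Step e f then 1 / ((G.deg (G.head e) : ℝ) - 1) else 0

/-- `n`-step transition probabilities `q_E^(n)` of the edge NBRW. -/
noncomputable def qn (G : Multigraph) : ℕ → G.E → G.E → ℝ
  | 0, e, f => open Classical in if e = f then 1 else 0
  | n + 1, e, f => ∑' g : G.E, qn G n e g * G.q g f

/-- Vertex NBRW transition probabilities:
`q^(n)(x,y) = (1/deg x) ∑_{e⁺=x, f⁺=y} q_E^(n)(e,f)`. -/
noncomputable def qv (n : ℕ) (x y : G.V) : ℝ :=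
  (1 / (G.deg x : ℝ)) *
    ∑' (e : {e : G.E // G.head e = x}) (f : {f : G.E // G.head f = y}),
      G.qn n e.1 f.1

def Adj (x y : G.V) : Prop := ∃ e : G.E, G.tail e = x ∧ G.head e = y

def Connected : Prop := ∀ x y : G.V, Relation.ReflTransGen G.Adj x y

/-- There is a walk of length `n` from `x` to `y`. -/
def WalkLen (G : Multigraph) : ℕ → G.V → G.V → Prop
  | 0, x, y => x = y
  | n + 1, x, y => ∃ z, G.Adj x z ∧ WalkLen G n z y

/-- Graph distance. -/
noncomputable def dist (x y : G.V) : ℕ := sInf {n | G.WalkLen n x y}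

/-- A cycle: a nonempty list of distinct oriented edges, with distinct initial
vertices, such that consecutive edges (cyclically) form non-backtracking steps. -/
def IsCycle (l : List G.E) : Prop :=
  l ≠ [] ∧ l.Nodup ∧ (l.map G.tail).Nodup ∧ List.Chain' G.Step (l ++ l.take 1)

/-- Small cycles are dense: some radius `R` works for every ball. -/
def SmallCyclesDense : Prop :=
  ∃ R : ℕ, ∀ x : G.V, ∃ l : List G.E, G.IsCycle l ∧ ∀ e ∈ l, G.dist x (G.tail e) ≤ R

/-- `X` is a (finite) cycle graph. -/
def IsCycleGraph : Prop := (Set.univ : Set G.V).Finite ∧ ∀ x, G.deg x = 2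

def Bipartite : Prop := ∃ c : G.V → Bool, ∀ e : G.E, c (G.tail e) ≠ c (G.head e)

end Multigraph


section Aux

namespace Multigraph

variable (G : Multigraph)

lemma tail_bar' (e : G.E) : G.tail (G.bar e) = G.head e := by
  have h := G.head_bar (G.bar e)
  rw [G.bar_bar] at h
  exact h.symm

lemma bar_inj' {e f : G.E} (h : G.bar e = G.bar f) : e = f := by
  rw [← G.bar_bar e, h, G.bar_bar]

lemma step_bar' {e f : G.E} (h : G.Step e f) : G.Step (G.bar f) (G.bar e) := by
  obtain ⟨h1, h2⟩ := h
  refine ⟨?_, ?_⟩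
  · rw [G.tail_bar', G.head_bar, h1]
  · rw [G.bar_bar]
    intro hh
    exact h2 hh.symm

lemma exists_step' (hdeg : ∀ x, 2 ≤ G.deg x) (e : G.E) : ∃ f, G.Step e f := by
  classical
  have hbar : G.bar e ∈ (G.locFin (G.head e)).toFinset := by
    simp [Set.Finite.mem_toFinset, G.tail_bar']
  have hcard : 1 < (G.locFin (G.head e)).toFinset.card :=
    lt_of_lt_of_le one_lt_two (hdeg (G.head e))
  obtain ⟨f, hf, hne⟩ := Finset.exists_mem_ne hcard (G.bar e)
  have htail : G.tail f = G.head e := by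
    simpa [Set.Finite.mem_toFinset] using hf
  exact ⟨f, htail, hne⟩

/-- If `a` reaches `b` and `b` reaches its reversal, then `a` reaches its reversal. -/
lemma reach_rev_closed' {a b : G.E} (h : G.Reach a b) (hb : G.Reach b (G.bar b)) :
    G.Reach a (G.bar a) := by
  induction h using Relation.ReflTransGen.head_induction_on with
  | refl => exact hb
  | head hstep _ ih =>
      exact Relation.ReflTransGen.head hstep (ih.tail (G.step_bar' hstep))

lemma q_nonneg' (hdeg : ∀ x, 2 ≤ G.deg x) (e f : G.E) : 0 ≤ G.q e f := by
  unfold q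
  split
  · have h2 : (2 : ℝ) ≤ (G.deg (G.head e) : ℝ) := by exact_mod_cast hdeg (G.head e)
    apply div_nonneg zero_le_one
    linarith
  · exact le_refl 0

lemma q_pos' (hdeg : ∀ x, 2 ≤ G.deg x) {e f : G.E} (h : G.Step e f) : 0 < G.q e f := by
  unfold q
  rw [if_pos h]
  have h2 : (2 : ℝ) ≤ (G.deg (G.head e) : ℝ) := by exact_mod_cast hdeg (G.head e)
  apply div_pos zero_lt_one
  linarith

lemma qn_nonneg' [Fintype G.E] (hdeg : ∀ x, 2 ≤ G.deg x) (n : ℕ) (e : G.E) :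
    ∀ f, 0 ≤ G.qn n e f := by
  induction n with
  | zero =>
      intro f
      simp only [qn]
      split <;> norm_num
  | succ n ih =>
      intro f
      show 0 ≤ ∑' g : G.E, G.qn n e g * G.q g f
      exact tsum_nonneg fun g => mul_nonneg (ih g) (G.q_nonneg' hdeg g f)

lemma qn_single_le' [Fintype G.E] (hdeg : ∀ x, 2 ≤ G.deg x) (n : ℕ) (e g f : G.E) :
    G.qn n e g * G.q g f ≤ G.qn (n + 1) e f := by
  show _ ≤ ∑' g : G.E, G.qn n e g * G.q g f
  rw [tsum_fintype]
  exact Finset.single_le_sum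
    (f := fun g => G.qn n e g * G.q g f)
    (fun i _ => mul_nonneg (G.qn_nonneg' hdeg n e i) (G.q_nonneg' hdeg i f))
    (Finset.mem_univ g)

lemma reach_qn_pos' [Fintype G.E] (hdeg : ∀ x, 2 ≤ G.deg x) {e g : G.E}
    (h : G.Reach e g) : ∃ m : ℕ, 0 < G.qn m e g := by
  induction h with
  | refl =>
      refine ⟨0, ?_⟩
      simp only [qn, if_pos rfl]
      norm_num
  | tail _ hstep ih =>
      obtain ⟨m, hm⟩ := ih
      exact ⟨m + 1, lt_of_lt_of_le (mul_pos hm (G.q_pos' hdeg hstep))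
        (G.qn_single_le' hdeg m e _ _)⟩

/-- The combinatorial core: if some edge cannot reach its reversal, then every
vertex has degree 2 (so the graph is a cycle). -/
lemma key_deg_two (G : Multigraph) [Fintype G.V] [Fintype G.E]
    (hconn : G.Connected) (hdeg : ∀ x, 2 ≤ G.deg x)
    (e : G.E) (hbad : ¬ G.Reach e (G.bar e)) : ∀ x : G.V, G.deg x = 2 := by
  classical
  -- choose a minimal element of the reachability preorder below `e`
  obtain ⟨f, hfD, hmin⟩ := Finset.exists_min_image
    (Finset.univ.filter (fun g => G.Reach e g))
    (fun g => (Finset.univ.filter (fun h => G.Reach g h)).card)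
    ⟨e, Finset.mem_filter.mpr ⟨Finset.mem_univ e, Relation.ReflTransGen.refl⟩⟩
  have hef : G.Reach e f := by simpa using hfD
  -- the sink strong component
  set C : Finset G.E := Finset.univ.filter (fun g => G.Reach f g) with hCdef
  have hmemC : ∀ {g : G.E}, g ∈ C ↔ G.Reach f g := by
    intro g; simp [hCdef]
  have hfC : f ∈ C := hmemC.mpr Relation.ReflTransGen.refl
  have hstrong : ∀ g ∈ C, G.Reach g f := by
    intro g hg
    have hgReach : G.Reach f g := hmemC.mp hg
    have hgD : g ∈ Finset.univ.filter (fun g => G.Reach e g) :=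
      Finset.mem_filter.mpr ⟨Finset.mem_univ g, hef.trans hgReach⟩
    have hsub : (Finset.univ.filter (fun h => G.Reach g h)) ⊆
        (Finset.univ.filter (fun h => G.Reach f h)) := by
      intro h hh
      simp only [Finset.mem_filter, Finset.mem_univ, true_and] at hh ⊢
      exact hgReach.trans hh
    have heq : (Finset.univ.filter (fun h => G.Reach g h)) =
        (Finset.univ.filter (fun h => G.Reach f h)) :=
      Finset.eq_of_subset_of_card_le hsub (hmin g hgD)
    have : f ∈ Finset.univ.filter (fun h => G.Reach g h) := by
      rw [heq]
      exact Finset.mem_filter.mpr ⟨Finset.mem_univ f, Relation.ReflTransGen.refl⟩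
    simpa using this
  have hCsucc : ∀ {g h : G.E}, g ∈ C → G.Step g h → h ∈ C := by
    intro g h hg hs
    exact hmemC.mpr ((hmemC.mp hg).tail hs)
  have hCfine : ∀ g ∈ C, ¬ G.Reach g (G.bar g) := by
    intro g hg hfine
    exact hbad (G.reach_rev_closed' (hef.trans (hmemC.mp hg)) hfine)
  have hCbar : ∀ g ∈ C, G.bar g ∉ C := by
    intro g hg hbg
    exact hCfine g hg ((hstrong g hg).trans (hmemC.mp hbg))
  have huniq : ∀ g₁ ∈ C, ∀ g₂ ∈ C, G.head g₁ = G.head g₂ → g₁ = g₂ := by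
    intro g₁ hg₁ g₂ hg₂ hh
    by_contra hne
    have hstep : G.Step g₂ (G.bar g₁) := by
      refine ⟨?_, ?_⟩
      · rw [G.tail_bar', hh]
      · intro hc
        exact hne (G.bar_inj' hc)
    exact hCbar g₁ hg₁ (hCsucc hg₂ hstep)
  have hpred : ∀ g ∈ C, ∃ p ∈ C, G.Step p g := by
    intro g hg
    rcases Relation.ReflTransGen.cases_tail (hmemC.mp hg) with heq | ⟨p, hfp, hpg⟩
    · -- g = f
      subst heq
      obtain ⟨s, hs⟩ := G.exists_step' hdeg g
      have hsC : s ∈ C := hCsucc hg hs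
      rcases Relation.ReflTransGen.cases_tail (hstrong s hsC) with heq2 | ⟨p, hsp, hpf⟩
      · exact ⟨g, hg, heq2 ▸ hs⟩
      · exact ⟨p, hmemC.mpr ((Relation.ReflTransGen.single hs).trans hsp), hpf⟩
    · exact ⟨p, hmemC.mpr hfp, hpg⟩
  -- the vertex set of C
  set W : Finset G.V := C.image G.head with hWdef
  have htailW : ∀ g ∈ C, G.tail g ∈ W := by
    intro g hg
    obtain ⟨p, hpC, hp⟩ := hpred g hg
    rw [hWdef]
    exact Finset.mem_image.mpr ⟨p, hpC, hp.1.symm⟩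
  -- fibers of tail over C
  have hfiber : ∀ g ∈ C, C.filter (fun h => G.tail h = G.head g) =
      ((G.locFin (G.head g)).toFinset).erase (G.bar g) := by
    intro g hg
    ext h
    simp only [Finset.mem_filter, Finset.mem_erase, Set.Finite.mem_toFinset,
      Set.mem_setOf_eq]
    constructor
    · rintro ⟨hhC, ht⟩
      refine ⟨?_, ht⟩
      intro hc
      exact hCbar g hg (hc ▸ hhC)
    · rintro ⟨hne, ht⟩
      exact ⟨hCsucc hg ⟨ht, hne⟩, ht⟩
  have hfibercard : ∀ x ∈ W, (C.filter (fun h => G.tail h = x)).card = G.deg x - 1 := by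
    intro x hx
    obtain ⟨g, hgC, rfl⟩ := Finset.mem_image.mp hx
    rw [hfiber g hgC, Finset.card_erase_of_mem]
    · rfl
    · simp [Set.Finite.mem_toFinset, G.tail_bar']
  have hcardC : C.card = ∑ x ∈ W, (C.filter (fun h => G.tail h = x)).card :=
    Finset.card_eq_sum_card_fiberwise (fun h hh => htailW h hh)
  have hWcard : W.card = C.card := by
    rw [hWdef]
    exact Finset.card_image_of_injOn fun g₁ h₁ g₂ h₂ heq => huniq g₁ h₁ g₂ h₂ heq
  -- every vertex of W has degree 2
  have hdeg2W : ∀ x ∈ W, G.deg x = 2 := by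
    have hsum : ∑ x ∈ W, (G.deg x - 1) = ∑ x ∈ W, 1 := by
      rw [Finset.sum_congr rfl (fun x hx => (hfibercard x hx).symm), ← hcardC,
        Finset.sum_const, smul_eq_mul, mul_one, hWcard]
    by_contra hcon
    push_neg at hcon
    obtain ⟨x₀, hx₀, hx₀ne⟩ := hcon
    have hlt : ∑ x ∈ W, 1 < ∑ x ∈ W, (G.deg x - 1) := by
      refine Finset.sum_lt_sum (fun i hi => ?_) ⟨x₀, hx₀, ?_⟩
      · have := hdeg i; omega
      · have := hdeg x₀; omega
    omega
  -- W is closed under adjacency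
  have hWclosed : ∀ x ∈ W, ∀ z, G.Adj x z → z ∈ W := by
    intro x hx z hadj
    obtain ⟨h, hth, hhh⟩ := hadj
    obtain ⟨g, hgC, hgx⟩ := Finset.mem_image.mp hx
    by_cases hcase : h = G.bar g
    · subst hcase
      have : z = G.tail g := by rw [← hhh, G.head_bar]
      rw [this]
      exact htailW g hgC
    · have hstep : G.Step g h := ⟨by rw [hth, hgx], hcase⟩
      exact Finset.mem_image.mpr ⟨h, hCsucc hgC hstep, hhh⟩
  -- connectivity implies W is everything
  have hWall : ∀ v : G.V, v ∈ W := by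
    intro v
    have hx0 : G.head f ∈ W := Finset.mem_image.mpr ⟨f, hfC, rfl⟩
    have hc := hconn (G.head f) v
    induction hc with
    | refl => exact hx0
    | tail _ hadj ih => exact hWclosed _ ih _ hadj
  intro x
  exact hdeg2W x (hWall x)

end Multigraph

end Aux

/-- In a finite connected multigraph with minimum degree 2 that is not
a cycle, from every oriented edge `e` one can reach its reversal `ě` by a
non-backtracking path of some length `n ≥ 1`. -/
theorem nbrw_reach_reversal (G : Multigraph) [Fintype G.V] [Fintype G.E]
    (hconn : G.Connected) (hdeg : ∀ x, 2 ≤ G.deg x) (hnc : ¬ G.IsCycleGraph) :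
    ∀ e : G.E, ∃ n : ℕ, 1 ≤ n ∧ 0 < G.qn n e (G.bar e) := by
  intro e
  by_cases h : G.Reach e (G.bar e)
  · rcases Relation.ReflTransGen.cases_tail h with heq | ⟨c, hec, hcb⟩
    · exact absurd heq (G.bar_ne e)
    · obtain ⟨m, hm⟩ := G.reach_qn_pos' hdeg hec
      exact ⟨m + 1, Nat.le_add_left 1 m,
        lt_of_lt_of_le (mul_pos hm (G.q_pos' hdeg hcb)) (G.qn_single_le' hdeg m e c _)⟩
  · exact absurd ⟨Set.finite_univ, Multigraph.key_deg_two G hconn hdeg e h⟩ hnc
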